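/- Left-tail CVaR admits the Rockafellar–Uryasev representation: CVaR_τ(X) = sup over v ∈ ℝ of (v − (1/τ)·E[(v − X)⁺]), where the supremum is attained at v = VaR_τ(X), for X with continuous CDF. -/

import Mathlib

open MeasureTheory

/-- Cumulative distribution function of `X` under `μ`. -/
noncomputable def cdf {Ω : Type*} [MeasurableSpace Ω] (μ : Measure Ω)
    (X : Ω → ℝ) (x : ℝ) : ℝ :=
  (μ {ω | X ω ≤ x}).toReal

/-- Value-at-risk: VaR_τ(X) = sup {x | F(x) ≤ τ}. -/
noncomputable def VaR {Ω : Type*} [MeasurableSpace Ω] (μ : Measure Ω)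
    (X : Ω → ℝ) (τ : ℝ) : ℝ :=
  sSup {x | cdf μ X x ≤ τ}

/-- Left-tail conditional value-at-risk: CVaR_τ(X) = E[X | X ≤ VaR_τ(X)]. -/
noncomputable def CVaR {Ω : Type*} [MeasurableSpace Ω] (μ : Measure Ω)
    (X : Ω → ℝ) (τ : ℝ) : ℝ :=
  (∫ ω in {ω | X ω ≤ VaR μ X τ}, X ω ∂μ) / (μ {ω | X ω ≤ VaR μ X τ}).toReal

/-!
Continuity of the CDF `F` gives `F (VaR_τ X) = τ`, so the tail event `A = {X ≤ VaR_τ X}` has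
probability `τ`. For every `v`, `∫_A (v - X) ≤ E[(v - X)⁺]`, with equality at `v = VaR_τ X`
because `(v - X)⁺` vanishes off `A` and equals `v - X` on it. Since `μ A = τ`,
`v - (1/τ) ∫_A (v - X) = (1/τ) ∫_A X = CVaR_τ X` for every `v`, which gives both claims.
-/

open Filter Topology Set

theorem Continuous.apply_sSup_setOf_le_eq {F : ℝ → ℝ} (hF : Continuous F) {a b τ : ℝ}
    (hbot : Tendsto F atBot (𝓝 a)) (htop : Tendsto F atTop (𝓝 b)) (haτ : a < τ) (hτb : τ < b) :
    F (sSup {x | F x ≤ τ}) = τ := by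
  set S := {x | F x ≤ τ}
  have hS_nonempty : S.Nonempty := ((hbot.eventually_lt_const haτ).exists).imp fun _ => le_of_lt
  have hS_bdd : BddAbove S := by
    obtain ⟨M, hM⟩ := eventually_atTop.1 (htop.eventually_const_lt hτb)
    exact ⟨M, fun x hx => not_lt.1 fun hMx => (hM x hMx.le).not_ge hx⟩
  have hsup_mem : sSup S ∈ S := (isClosed_le hF continuous_const).csSup_mem hS_nonempty hS_bdd
  refine le_antisymm hsup_mem
    (ge_of_tendsto (hF.continuousAt.continuousWithinAt (s := Ioi (sSup S))) ?_)
  filter_upwards [self_mem_nhdsWithin] with x (hx : sSup S < x)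
  by_contra! hxS
  exact (le_csSup hS_bdd hxS.le).not_gt hx

section RiskMeasures

variable {Ω : Type*} [MeasurableSpace Ω] {μ : Measure Ω} {X : Ω → ℝ}

theorem cdf_eq_cdf_map [IsProbabilityMeasure μ] (hX : AEMeasurable X μ) :
    cdf μ X = ProbabilityTheory.cdf (μ.map X) := by
  have := Measure.isProbabilityMeasure_map hX
  ext x
  rw [ProbabilityTheory.cdf_eq_real, measureReal_def,
    Measure.map_apply₀ hX measurableSet_Iic.nullMeasurableSet]
  rfl

theorem cdf_VaR_eq [IsProbabilityMeasure μ] (hX : AEMeasurable X μ)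
    (hcont : Continuous (cdf μ X)) {τ : ℝ} (hτ : τ ∈ Ioo (0 : ℝ) 1) :
    cdf μ X (VaR μ X τ) = τ := by
  have := Measure.isProbabilityMeasure_map hX
  refine hcont.apply_sSup_setOf_le_eq ?_ ?_ hτ.1 hτ.2 <;> rw [cdf_eq_cdf_map hX]
  exacts [ProbabilityTheory.tendsto_cdf_atBot _, ProbabilityTheory.tendsto_cdf_atTop _]

theorem setIntegral_sub_le_integral_max_sub_zero [IsFiniteMeasure μ] (hX : Integrable X μ)
    (s : Set Ω) (v : ℝ) : ∫ ω in s, (v - X ω) ∂μ ≤ ∫ ω, max (v - X ω) 0 ∂μ := by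
  have hint : Integrable (fun ω => v - X ω) μ := (integrable_const v).sub hX
  calc ∫ ω in s, (v - X ω) ∂μ ≤ ∫ ω in s, max (v - X ω) 0 ∂μ :=
        setIntegral_mono hint.integrableOn hint.pos_part.integrableOn fun _ => le_max_left _ _
    _ ≤ ∫ ω, max (v - X ω) 0 ∂μ :=
        setIntegral_le_integral hint.pos_part (ae_of_all _ fun _ => le_max_right _ _)

theorem integral_max_sub_zero_eq_setIntegral (hX : AEMeasurable X μ) (v : ℝ) :
    ∫ ω, max (v - X ω) 0 ∂μ = ∫ ω in {ω | X ω ≤ v}, (v - X ω) ∂μ := by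
  have hs : NullMeasurableSet {ω | X ω ≤ v} μ := hX.nullMeasurableSet_preimage measurableSet_Iic
  rw [← setIntegral_eq_integral_of_forall_compl_eq_zero fun ω (hω : ¬X ω ≤ v) =>
    max_eq_right (by linarith [not_le.1 hω])]
  exact setIntegral_congr_fun₀ hs fun ω (hω : X ω ≤ v) => max_eq_left (sub_nonneg.2 hω)

theorem sub_one_div_mul_setIntegral_sub_eq_CVaR [IsFiniteMeasure μ] (hX : Integrable X μ) {τ : ℝ}
    (hτ : τ ≠ 0) (htail : μ.real {ω | X ω ≤ VaR μ X τ} = τ) (v : ℝ) :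
    v - (1 / τ) * ∫ ω in {ω | X ω ≤ VaR μ X τ}, (v - X ω) ∂μ = CVaR μ X τ := by
  rw [integral_sub (integrable_const v).integrableOn hX.integrableOn, setIntegral_const,
    smul_eq_mul, htail, CVaR, ← measureReal_def, htail]
  field_simp
  ring

end RiskMeasures

theorem cvar_rockafellar_uryasev_general {Ω : Type*} [MeasurableSpace Ω]
    (μ : Measure Ω) [IsProbabilityMeasure μ]
    (X : Ω → ℝ) (hX : Integrable X μ) (τ : ℝ) (hτ : τ ∈ Set.Ioo (0 : ℝ) 1)
    (hcont : Continuous (cdf μ X)) :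
    (VaR μ X τ - (1 / τ) * ∫ ω, max (VaR μ X τ - X ω) 0 ∂μ = CVaR μ X τ) ∧
    ∀ v : ℝ, v - (1 / τ) * ∫ ω, max (v - X ω) 0 ∂μ ≤ CVaR μ X τ := by
  have htail : μ.real {ω | X ω ≤ VaR μ X τ} = τ := cdf_VaR_eq hX.aemeasurable hcont hτ
  have hCVaR := sub_one_div_mul_setIntegral_sub_eq_CVaR hX hτ.1.ne' htail
  refine ⟨?_, fun v => ?_⟩
  · rw [integral_max_sub_zero_eq_setIntegral hX.aemeasurable, hCVaR]
  · rw [← hCVaR v]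
    have := one_div_pos.2 hτ.1
    gcongr
    exact setIntegral_sub_le_integral_max_sub_zero hX _ v

/-- Rockafellar–Uryasev representation of left-tail CVaR:
CVaR_τ(X) = sup_{v ∈ ℝ} ( v − (1/τ)·E[(v − X)⁺] ), the supremum being
attained at v = VaR_τ(X), for X with continuous CDF. -/
theorem cvar_rockafellar_uryasev {Ω : Type*} [MeasurableSpace Ω]
    (μ : Measure Ω) [IsProbabilityMeasure μ]
    (X : Ω → ℝ) (hX : Integrable X μ) (τ : ℝ) (hτ : τ ∈ Set.Ioo (0 : ℝ) 1)
    (hcont : Continuous (cdf μ X))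
    (hpos : 0 < μ {ω | X ω ≤ VaR μ X τ}) :
    (VaR μ X τ - (1 / τ) * ∫ ω, max (VaR μ X τ - X ω) 0 ∂μ = CVaR μ X τ) ∧
    ∀ v : ℝ, v - (1 / τ) * ∫ ω, max (v - X ω) 0 ∂μ ≤ CVaR μ X τ :=
  cvar_rockafellar_uryasev_general μ X hX τ hτ hcont
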